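/- arXiv:2406.14104 — 5 statements merged into one kernel-verified Lean document; each statement's English description precedes it below -/
import Mathlib

section
/- Let x ∈ J with ‖x‖_J = 1. If ‖x‖₂ = 1 (where ‖·‖₂ is the ℓ² norm), then x is an extreme point of the closed unit ball of J. -/
open Filter Topology Classical

noncomputable section

/-- Admissible finite families of pairwise disjoint, increasingly ordered intervals
`[f i .1, f i .2]` of `ℕ`. -/
def Admissible (n : ℕ) (f : Fin n → ℕ × ℕ) : Prop :=
  (∀ i, (f i).1 ≤ (f i).2) ∧ ∀ i j : Fin n, i < j → (f i).2 < (f j).1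

/-- The set of estimates appearing in the definition of the James norm. -/
def estimates (x : ℕ → ℝ) : Set ℝ :=
  {r | ∃ n, ∃ f : Fin n → ℕ × ℕ, Admissible n f ∧
    r = Real.sqrt (∑ i, (∑ k ∈ Finset.Icc (f i).1 (f i).2, x k) ^ 2)}

/-- `x` belongs to the James space `J`. -/
def MemJ (x : ℕ → ℝ) : Prop := BddAbove (estimates x)

/-- The James norm. -/
def jamesNorm (x : ℕ → ℝ) : ℝ := sSup (estimates x)

/-- The ℓ² norm. -/
def l2Norm (x : ℕ → ℝ) : ℝ := Real.sqrt (∑' k, (x k) ^ 2)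

/-- The closed unit ball of the James space. -/
def ballJ : Set (ℕ → ℝ) := {x | MemJ x ∧ jamesNorm x ≤ 1}

/-- The support of a sequence. -/
def supp (x : ℕ → ℝ) : Set ℕ := {n | x n ≠ 0}

/-- The (possibly infinite) sum of `x` over a subset `I` of `ℕ`,
as the limit of the partial sums. -/
def setSum (x : ℕ → ℝ) (I : Set ℕ) : ℝ :=
  limUnder atTop (fun N => ∑ k ∈ Finset.range N, if k ∈ I then x k else 0)

/-- An `x`-norming family: a (finite or infinite) family of pairwise disjoint
nonempty intervals of `ℕ`, indexed by an initial segment `F` of `ℕ`, ordered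
increasingly, whose interval sums exist and realize the James norm of `x`. -/
structure NormingFamily (x : ℕ → ℝ) where
  F : Set ℕ
  F_nonempty : F.Nonempty
  initial : ∀ ⦃m n : ℕ⦄, m ≤ n → n ∈ F → m ∈ F
  I : ℕ → Set ℕ
  I_nonempty : ∀ i ∈ F, (I i).Nonempty
  I_interval : ∀ i ∈ F, (I i).OrdConnected
  ordered : ∀ i ∈ F, ∀ j ∈ F, i < j → ∀ a ∈ I i, ∀ b ∈ I j, a < b
  sums_exist : ∀ i ∈ F, ∃ l : ℝ,
    Tendsto (fun N => ∑ k ∈ Finset.range N, if k ∈ I i then x k else 0) atTop (𝓝 l)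
  norming : ∑' i : F, (setSum x (I i)) ^ 2 = (jamesNorm x) ^ 2

/-- An `x`-norming partition: an `x`-norming family whose intervals cover the
support of `x`, every interval has its minimum in the support, every non-final
interval has its maximum in the support, and the final interval does not extend
beyond the supremum of the support. -/
structure NormingPartition (x : ℕ → ℝ) extends NormingFamily x where
  covers : supp x ⊆ ⋃ i ∈ F, I i
  min_in_supp : ∀ i ∈ F, ∃ m ∈ I i ∩ supp x, ∀ k ∈ I i, m ≤ k
  max_in_supp : ∀ i ∈ F, (∃ j ∈ F, i < j) → ∃ m ∈ I i ∩ supp x, ∀ k ∈ I i, k ≤ m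
  bounded_by_supp : ∀ i ∈ F, ∀ k ∈ I i, ∃ m ∈ supp x, k ≤ m

/-- `n₁ < n₂` are consecutive elements of the support of `x`. -/
def Consecutive (x : ℕ → ℝ) (n₁ n₂ : ℕ) : Prop :=
  n₁ ∈ supp x ∧ n₂ ∈ supp x ∧ n₁ < n₂ ∧ ∀ k, n₁ < k → k < n₂ → x k = 0

end

/-!
Singleton intervals show `‖y‖₂ ≤ ‖y‖_J`, so the unit ball of `J` sits inside the unit ball of `ℓ²`,
and `x` lies on the unit sphere of `ℓ²`. Since `ℓ²` is strictly convex, `x` is an extreme point of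
the `ℓ²` ball, hence of the smaller ball of `J`.
-/

open Set Metric

lemma zero_mem_estimates (x : ℕ → ℝ) : (0 : ℝ) ∈ estimates x :=
  ⟨0, Fin.elim0, ⟨fun i => i.elim0, fun i => i.elim0⟩, by simp⟩

lemma jamesNorm_nonneg {x : ℕ → ℝ} (hx : MemJ x) : 0 ≤ jamesNorm x :=
  le_csSup hx (zero_mem_estimates x)

lemma sum_range_sq_le_jamesNorm_sq {x : ℕ → ℝ} (hx : MemJ x) (N : ℕ) :
    ∑ k ∈ Finset.range N, x k ^ 2 ≤ jamesNorm x ^ 2 := by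
  have hmem : √(∑ k ∈ Finset.range N, x k ^ 2) ∈ estimates x := by
    refine ⟨N, fun i => (i, i), ⟨fun _ => le_rfl, fun _ _ hij => hij⟩, ?_⟩
    simp [← Fin.sum_univ_eq_sum_range (fun k => x k ^ 2) N]
  rw [← Real.sqrt_le_left (jamesNorm_nonneg hx)]
  exact le_csSup hx hmem

lemma summable_sq_of_memJ {x : ℕ → ℝ} (hx : MemJ x) : Summable fun k => x k ^ 2 :=
  summable_of_sum_range_le (fun _ => sq_nonneg _) (sum_range_sq_le_jamesNorm_sq hx)

lemma l2Norm_le_jamesNorm {x : ℕ → ℝ} (hx : MemJ x) : l2Norm x ≤ jamesNorm x :=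
  Real.sqrt_le_left (jamesNorm_nonneg hx) |>.mpr <|
    (summable_sq_of_memJ hx).tsum_le_of_sum_range_le (sum_range_sq_le_jamesNorm_sq hx)

lemma memℓp_two_of_summable_sq {α : Type*} {x : α → ℝ} (hx : Summable fun k => x k ^ 2) :
    Memℓp x 2 :=
  memℓp_gen <| by simpa [Real.rpow_two] using hx

lemma norm_lp_two_eq_l2Norm (f : lp (fun _ : ℕ => ℝ) 2) : ‖f‖ = l2Norm f := by
  simp [lp.norm_eq_tsum_rpow, l2Norm, Real.sqrt_eq_rpow]

theorem stmt2 (x : ℕ → ℝ) (hx : MemJ x) (h1 : jamesNorm x = 1) (h2 : l2Norm x = 1) :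
    x ∈ Set.extremePoints ℝ ballJ := by
  let toL2 (y : ℕ → ℝ) (hy : y ∈ ballJ) : lp (fun _ : ℕ => ℝ) 2 :=
    ⟨y, memℓp_two_of_summable_sq (summable_sq_of_memJ hy.1)⟩
  have toL2_mem_closedBall (y : ℕ → ℝ) (hy : y ∈ ballJ) : toL2 y hy ∈ closedBall 0 1 := by
    rw [mem_closedBall_zero_iff, norm_lp_two_eq_l2Norm]
    exact (l2Norm_le_jamesNorm hy.1).trans hy.2
  have hxB : x ∈ ballJ := ⟨hx, h1.le⟩
  have hX : toL2 x hxB ∈ extremePoints ℝ (closedBall 0 1) :=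
    StrictConvexSpace.sphere_subset_extremePoints_closedBall 0 one_ne_zero <| by
      rw [mem_sphere_zero_iff_norm, norm_lp_two_eq_l2Norm, ← h2]
  refine ⟨hxB, fun y hy z hz ⟨a, b, ha, hb, hab, hxyz⟩ => ?_⟩
  have hXseg : toL2 x hxB ∈ openSegment ℝ (toL2 y hy) (toL2 z hz) :=
    ⟨a, b, ha, hb, hab, lp.ext hxyz⟩
  exact congrArg Subtype.val (hX.2 (toL2_mem_closedBall y hy) (toL2_mem_closedBall z hz) hXseg)
end

section
/- Let x ∈ ℓ² with ‖x‖₂ = 1. Then x is an extreme point of the unit ball of the James space J if and only if for every interval I of ℕ one has |∑_{n∈I} x(n)|² ≤ ∑_{n∈I} |x(n)|². -/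
open Filter Topology Classical

/-!
Testing the James norm on singletons gives ‖y‖₂ ≤ ‖y‖_J, so the unit ball of `J` lies in the
unit ball of `ℓ²`; since the latter is strictly convex, every `x ∈ ballJ` with ‖x‖₂ = 1 is an
extreme point of `ballJ`. Such an `x` has non-positive remainder on every finite interval `[a, b]`:
otherwise the family made of `[a, b]` and singletons would give an estimate exceeding ‖x‖₂ = 1.
Conversely, non-positive remainder on the intervals of an admissible family bounds its estimate
by ‖x‖₂, so ‖x‖_J ≤ 1. Infinite intervals reduce to finite ones: the inequality
(∑_{[m, n)} x)² ≤ ∑_{[m, n)} x² makes the partial sums Cauchy and passes to the limit.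
-/

theorem Finset.eq_Icc_min'_max'_of_ordConnected {α : Type*} [LinearOrder α] [LocallyFiniteOrder α]
    {s : Finset α} (hs : (s : Set α).OrdConnected) (hne : s.Nonempty) :
    s = Finset.Icc (s.min' hne) (s.max' hne) := by
  ext k
  refine ⟨fun hk => Finset.mem_Icc.2 ⟨s.min'_le k hk, s.le_max' k hk⟩, fun hk => ?_⟩
  exact_mod_cast hs.out (s.min'_mem hne) (s.max'_mem hne) (Finset.mem_Icc.1 hk)

theorem setSum_coe_finset (x : ℕ → ℝ) (s : Finset ℕ) : setSum x s = ∑ k ∈ s, x k := by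
  obtain ⟨n, hn⟩ := s.exists_nat_subset_range
  refine Tendsto.limUnder_eq (tendsto_atTop_of_eventually_const (i₀ := n) fun N hN => ?_)
  simp_rw [← Set.indicator_apply]
  exact Finset.sum_indicator_subset x (hn.trans (Finset.range_mono hN))

def HereditarilyNPR (x : ℕ → ℝ) : Prop :=
  ∀ a b : ℕ, (∑ k ∈ Finset.Icc a b, x k) ^ 2 ≤ ∑ k ∈ Finset.Icc a b, x k ^ 2

namespace HereditarilyNPR

variable {x : ℕ → ℝ}

theorem sq_sum_le (hx : HereditarilyNPR x) {s : Finset ℕ} (hs : (s : Set ℕ).OrdConnected) :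
    (∑ k ∈ s, x k) ^ 2 ≤ ∑ k ∈ s, x k ^ 2 := by
  rcases s.eq_empty_or_nonempty with rfl | hne
  · simp
  rw [Finset.eq_Icc_min'_max'_of_ordConnected hs hne]
  exact hx _ _

theorem indicator (hx : HereditarilyNPR x) {I : Set ℕ} (hI : I.OrdConnected) :
    HereditarilyNPR (I.indicator x) := by
  intro a b
  have hsq : ∀ k, I.indicator x k ^ 2 = I.indicator (fun k => x k ^ 2) k := fun k => by
    by_cases hk : k ∈ I <;> simp [hk]
  simp only [hsq]
  simp only [Set.indicator_apply, ← Finset.sum_filter]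
  refine hx.sq_sum_le ?_
  convert (Set.ordConnected_Icc (a := a) (b := b)).inter hI using 1
  ext k
  simp

theorem cauchySeq (hx : HereditarilyNPR x) (hsum : Summable fun k => x k ^ 2) :
    CauchySeq fun N => ∑ k ∈ Finset.range N, x k := by
  rw [Metric.cauchySeq_iff']
  intro ε hε
  obtain ⟨N, hN⟩ := Metric.cauchySeq_iff'.1 hsum.hasSum.tendsto_sum_nat.cauchySeq (ε ^ 2)
    (by positivity)
  refine ⟨N, fun n hn => ?_⟩
  have hIco := hx.sq_sum_le (s := Finset.Ico N n)
    (by rw [Finset.coe_Ico]; exact Set.ordConnected_Ico)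
  have hNn := hN n hn
  rw [Real.dist_eq, ← Finset.sum_Ico_eq_sub _ hn] at hNn ⊢
  exact abs_lt_of_sq_lt_sq (hIco.trans_lt ((le_abs_self _).trans_lt hNn)) hε.le

theorem sq_limUnder_le (hx : HereditarilyNPR x) (hsum : Summable fun k => x k ^ 2) :
    limUnder atTop (fun N => ∑ k ∈ Finset.range N, x k) ^ 2 ≤ ∑' k, x k ^ 2 := by
  obtain ⟨l, hl⟩ := cauchySeq_tendsto_of_complete (hx.cauchySeq hsum)
  rw [hl.limUnder_eq]
  refine le_of_tendsto' (hl.pow 2) fun N => ?_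
  calc (∑ k ∈ Finset.range N, x k) ^ 2 ≤ ∑ k ∈ Finset.range N, x k ^ 2 :=
        hx.sq_sum_le (by rw [Finset.coe_range]; exact Set.ordConnected_Iio)
    _ ≤ ∑' k, x k ^ 2 := hsum.sum_le_tsum _ fun k _ => sq_nonneg _

theorem sq_setSum_le (hx : HereditarilyNPR x) (hsum : Summable fun k => x k ^ 2)
    {I : Set ℕ} (hI : I.OrdConnected) : setSum x I ^ 2 ≤ ∑' n : I, x n ^ 2 := by
  have hsq : (fun k => I.indicator x k ^ 2) = I.indicator fun k => x k ^ 2 := funext fun k => by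
    by_cases hk : k ∈ I <;> simp [hk]
  have h := (hx.indicator hI).sq_limUnder_le (by rw [hsq]; exact hsum.indicator I)
  simp_rw [Set.indicator_apply] at h
  rwa [tsum_subtype I fun k => x k ^ 2, ← hsq]

end HereditarilyNPR

theorem sqrt_sum_sq_le_jamesNorm {x : ℕ → ℝ} (hx : MemJ x) (s : Finset ℕ) (r : ℕ → ℕ)
    (hr : ∀ a ∈ s, a ≤ r a) (hsep : ∀ a ∈ s, ∀ b ∈ s, a < b → r a < b) :
    √(∑ a ∈ s, (∑ k ∈ Finset.Icc a (r a), x k) ^ 2) ≤ jamesNorm x := by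
  let e := s.orderIsoOfFin rfl
  have hadm : Admissible s.card fun i => ((e i : ℕ), r (e i)) :=
    ⟨fun i => hr _ (e i).2, fun i j hij => hsep _ (e i).2 _ (e j).2 (e.strictMono hij)⟩
  refine le_of_eq_of_le ?_ (le_csSup hx ⟨_, _, hadm, rfl⟩)
  rw [← Finset.sum_coe_sort s, ← e.toEquiv.sum_comp]
  rfl

theorem sum_sq_le_one_of_mem_ballJ {x : ℕ → ℝ} (hx : x ∈ ballJ) (s : Finset ℕ) (r : ℕ → ℕ)
    (hr : ∀ a ∈ s, a ≤ r a) (hsep : ∀ a ∈ s, ∀ b ∈ s, a < b → r a < b) :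
    ∑ a ∈ s, (∑ k ∈ Finset.Icc a (r a), x k) ^ 2 ≤ 1 :=
  Real.sqrt_le_one.1 ((sqrt_sum_sq_le_jamesNorm hx.1 s r hr hsep).trans hx.2)

theorem sum_range_sq_le_one_of_mem_ballJ {x : ℕ → ℝ} (hx : x ∈ ballJ) (N : ℕ) :
    ∑ k ∈ Finset.range N, x k ^ 2 ≤ 1 := by
  simpa using sum_sq_le_one_of_mem_ballJ hx (Finset.range N) id (fun _ _ => le_rfl)
    fun _ _ _ _ h => h

theorem summable_sq_of_mem_ballJ {x : ℕ → ℝ} (hx : x ∈ ballJ) : Summable fun k => x k ^ 2 :=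
  summable_of_sum_range_le (fun _ => sq_nonneg _) (sum_range_sq_le_one_of_mem_ballJ hx)

theorem tsum_sq_le_one_of_mem_ballJ {x : ℕ → ℝ} (hx : x ∈ ballJ) : ∑' k, x k ^ 2 ≤ 1 :=
  (summable_sq_of_mem_ballJ hx).tsum_le_of_sum_range_le (sum_range_sq_le_one_of_mem_ballJ hx)

theorem hereditarilyNPR_of_mem_ballJ {x : ℕ → ℝ} (hx : x ∈ ballJ) (h1 : ∑' k, x k ^ 2 = 1) :
    HereditarilyNPR x := by
  intro a b
  rcases lt_or_ge b a with hba | hab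
  · simp [Finset.Icc_eq_empty_of_lt hba]
  set B := ∑ k ∈ Finset.Icc a b, x k
  -- Merge `[a, b]` into one interval and keep all other indices below `N` as singletons.
  have hN : ∀ N, b < N →
      B ^ 2 + (∑ k ∈ Finset.range N, x k ^ 2 - ∑ k ∈ Finset.Icc a b, x k ^ 2) ≤ 1 := by
    intro N hbN
    have hsub : Finset.Icc a b ⊆ Finset.range N := fun k hk => by
      simp only [Finset.mem_Icc, Finset.mem_range] at hk ⊢; omega
    have ha : a ∉ Finset.range N \ Finset.Icc a b := by simp [hab]
    have h := sum_sq_le_one_of_mem_ballJ hx (insert a (Finset.range N \ Finset.Icc a b))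
      (fun k => if k = a then b else k)
      (fun k _ => by split_ifs <;> omega)
      (fun k hk k' hk' hlt => by simp only [Finset.mem_insert, Finset.mem_sdiff, Finset.mem_range,
        Finset.mem_Icc] at hk hk'; split_ifs <;> omega)
    rw [Finset.sum_insert ha, if_pos rfl] at h
    rw [← Finset.sum_sdiff_eq_sub hsub]
    refine le_of_eq_of_le (congrArg (B ^ 2 + ·) (Finset.sum_congr rfl fun k hk => ?_)) h
    have hka : k ≠ a := fun hka => ha (hka ▸ hk)
    simp [hka]
  have hlim := (h1 ▸ (summable_sq_of_mem_ballJ hx).hasSum.tendsto_sum_nat).sub_const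
    (∑ k ∈ Finset.Icc a b, x k ^ 2) |>.const_add (B ^ 2)
  have := le_of_tendsto hlim ((eventually_gt_atTop b).mono hN)
  linarith

theorem Admissible.pairwiseDisjoint {n : ℕ} {f : Fin n → ℕ × ℕ} (hf : Admissible n f) :
    ((Finset.univ : Finset (Fin n)) : Set (Fin n)).PairwiseDisjoint
      fun i => Finset.Icc (f i).1 (f i).2 := by
  intro i _ j _ hij
  rcases hij.lt_or_gt with h | h
  all_goals
    have := hf.2 _ _ h
    refine Finset.disjoint_left.2 fun k hk hk' => ?_
    simp only [Finset.mem_Icc] at hk hk'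
    omega

theorem HereditarilyNPR.mem_ballJ {x : ℕ → ℝ} (hx : HereditarilyNPR x)
    (hsum : Summable fun k => x k ^ 2) (h1 : ∑' k, x k ^ 2 ≤ 1) : x ∈ ballJ := by
  have hub : ∀ r ∈ estimates x, r ≤ 1 := by
    rintro r ⟨n, f, hf, rfl⟩
    refine Real.sqrt_le_one.2 ?_
    calc ∑ i, (∑ k ∈ Finset.Icc (f i).1 (f i).2, x k) ^ 2
        ≤ ∑ i, ∑ k ∈ Finset.Icc (f i).1 (f i).2, x k ^ 2 := Finset.sum_le_sum fun i _ => hx _ _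
      _ = ∑ k ∈ Finset.univ.biUnion fun i => Finset.Icc (f i).1 (f i).2, x k ^ 2 :=
        (Finset.sum_biUnion hf.pairwiseDisjoint).symm
      _ ≤ ∑' k, x k ^ 2 := hsum.sum_le_tsum _ fun _ _ => sq_nonneg _
      _ ≤ 1 := h1
  have hne : (estimates x).Nonempty := ⟨_, 0, Fin.elim0, ⟨fun i => i.elim0, fun i => i.elim0⟩, rfl⟩
  exact ⟨⟨1, hub⟩, csSup_le hne hub⟩

theorem eq_of_mem_openSegment_of_tsum_sq {ι : Type*} {x y z : ι → ℝ}
    (hy : Summable fun k => y k ^ 2) (hz : Summable fun k => z k ^ 2)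
    (hy1 : ∑' k, y k ^ 2 ≤ 1) (hz1 : ∑' k, z k ^ 2 ≤ 1) (hx1 : ∑' k, x k ^ 2 = 1)
    (hxyz : x ∈ openSegment ℝ y z) : y = z := by
  obtain ⟨s, t, hs, ht, hst, rfl⟩ := hxyz
  have hdiff : Summable fun k => (y k - z k) ^ 2 :=
    .of_nonneg_of_le (fun _ => sq_nonneg _) (fun k => by nlinarith [sq_nonneg (y k + z k)])
      ((hy.mul_left 2).add (hz.mul_left 2))
  have hpoint : ∀ k, (s • y + t • z) k ^ 2 = s * y k ^ 2 + t * z k ^ 2 - s * t * (y k - z k) ^ 2 :=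
    fun k => by
      obtain rfl : t = 1 - s := by linarith
      simp only [Pi.add_apply, Pi.smul_apply, smul_eq_mul]
      ring
  have hsum : (1 : ℝ) = s * ∑' k, y k ^ 2 + t * ∑' k, z k ^ 2 - s * t * ∑' k, (y k - z k) ^ 2 := by
    rw [← hx1, tsum_congr hpoint, ((hy.mul_left s).add (hz.mul_left t)).tsum_sub
      (hdiff.mul_left _), (hy.mul_left s).tsum_add (hz.mul_left t), tsum_mul_left, tsum_mul_left,
      tsum_mul_left]
  have hzero : ∑' k, (y k - z k) ^ 2 ≤ 0 := by
    nlinarith [mul_pos hs ht]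
  funext k
  have hk := (hdiff.le_tsum k fun _ _ => sq_nonneg _).trans hzero
  exact sub_eq_zero.1 (pow_eq_zero_iff two_ne_zero |>.1 (le_antisymm hk (sq_nonneg _)))

theorem mem_extremePoints_ballJ {x : ℕ → ℝ} (hx : x ∈ ballJ) (h1 : ∑' k, x k ^ 2 = 1) :
    x ∈ Set.extremePoints ℝ ballJ := by
  refine ⟨hx, fun y hy z hz hxyz => ?_⟩
  obtain rfl := eq_of_mem_openSegment_of_tsum_sq (summable_sq_of_mem_ballJ hy)
    (summable_sq_of_mem_ballJ hz) (tsum_sq_le_one_of_mem_ballJ hy) (tsum_sq_le_one_of_mem_ballJ hz)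
    h1 hxyz
  rw [openSegment_same] at hxyz
  exact hxyz.symm

theorem stmt5 (x : ℕ → ℝ) (hsum : Summable (fun k => (x k) ^ 2)) (h2 : l2Norm x = 1) :
    x ∈ Set.extremePoints ℝ ballJ ↔
      ∀ I : Set ℕ, I.OrdConnected →
        (setSum x I) ^ 2 ≤ ∑' n : I, (x (n : ℕ)) ^ 2 := by
  have h1 : ∑' k, x k ^ 2 = 1 := Real.sqrt_eq_one.1 h2
  refine ⟨fun hx I hI => (hereditarilyNPR_of_mem_ballJ hx.1 h1).sq_setSum_le hsum hI,
    fun H => ?_⟩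
  have hNPR : HereditarilyNPR x := fun a b => by
    have h := H (Finset.Icc a b) (Finset.coe_Icc a b ▸ Set.ordConnected_Icc)
    rw [setSum_coe_finset] at h
    exact h.trans_eq (Finset.tsum_subtype (Finset.Icc a b) fun k => x k ^ 2)
  exact mem_extremePoints_ballJ (hNPR.mem_ballJ hsum h1.le) h1
end

section
/- Let x ∈ J and let {Iᵢ}_{i∈F} be an x-norming family of disjoint intervals (i.e., ∑_{i∈F} |∑_{k∈Iᵢ} x(k)|² = ‖x‖_J²). Then the support of x is contained in ∪_{i∈F} Iᵢ. -/
open Filter Topology Classical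

noncomputable section

/-!
If `n ∈ supp x` lay outside every interval of a norming family, then adding the singleton
`{n}` to any finite subfamily (truncated to `[0, N)`) would give an admissible family, so
`x n ^ 2 + ∑ i ∈ T, (∑_{I i} x) ^ 2 ≤ ‖x‖_J ^ 2` for every finite `T`. Summing over all of
`F` and using that the family is norming gives `x n ^ 2 + ‖x‖_J ^ 2 ≤ ‖x‖_J ^ 2`.
-/

open Finset Function

variable {x : ℕ → ℝ}

lemma sqrt_sum_sq_mem_estimates {n : ℕ} (f : Fin n → ℕ × ℕ) (hle : ∀ i, (f i).1 ≤ (f i).2)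
    (hsep : Pairwise fun i j => (f i).2 < (f j).1 ∨ (f j).2 < (f i).1) :
    √(∑ i, (∑ k ∈ Icc (f i).1 (f i).2, x k) ^ 2) ∈ estimates x := by
  set σ := Tuple.sort fun i => (f i).1
  have hmono : Monotone ((fun i => (f i).1) ∘ σ) := Tuple.monotone_sort _
  refine ⟨n, f ∘ σ, ⟨fun i => hle _, fun i j hij => ?_⟩, ?_⟩
  · rcases hsep (σ.injective.ne hij.ne) with h | h
    · exact h
    · have := hmono hij.le
      have := hle (σ j)
      simp only [comp_apply] at *
      omega
  · rw [← Equiv.sum_comp σ]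
    rfl

lemma Finset.eq_Icc_min'_max' {α : Type*} [LinearOrder α] [LocallyFiniteOrder α] {s : Finset α}
    (hs : (s : Set α).OrdConnected) (hne : s.Nonempty) : s = Icc (s.min' hne) (s.max' hne) := by
  ext k
  refine ⟨fun hk => mem_Icc.2 ⟨min'_le s k hk, le_max' s k hk⟩, fun hk => ?_⟩
  exact_mod_cast hs.out (min'_mem s hne) (max'_mem s hne) (mem_Icc.1 hk)

lemma Finset.max'_lt_min'_or_max'_lt_min' {α : Type*} [LinearOrder α] {s t : Finset α}
    (hs : (s : Set α).OrdConnected) (ht : (t : Set α).OrdConnected) (hst : Disjoint s t)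
    (hs₀ : s.Nonempty) (ht₀ : t.Nonempty) :
    s.max' hs₀ < t.min' ht₀ ∨ t.max' ht₀ < s.min' hs₀ := by
  by_contra! h
  rcases le_total (s.min' hs₀) (t.min' ht₀) with hle | hle
  · have : t.min' ht₀ ∈ s := by
      exact_mod_cast hs.out (min'_mem s hs₀) (max'_mem s hs₀) ⟨hle, h.1⟩
    exact disjoint_left.1 hst this (min'_mem t ht₀)
  · have : s.min' hs₀ ∈ t := by
      exact_mod_cast ht.out (min'_mem t ht₀) (max'_mem t ht₀) ⟨hle, h.2⟩
    exact disjoint_left.1 hst (min'_mem s hs₀) this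

theorem sum_sq_sum_le_jamesNorm_sq (hx : MemJ x) {ι : Type*} [Fintype ι] (s : ι → Finset ℕ)
    (hconn : ∀ i, (s i : Set ℕ).OrdConnected) (hdisj : Pairwise (Disjoint on s)) :
    ∑ i, (∑ k ∈ s i, x k) ^ 2 ≤ jamesNorm x ^ 2 := by
  let ι' := {i // (s i).Nonempty}
  let e := Fintype.equivFin ι'
  let f : Fin (Fintype.card ι') → ℕ × ℕ := fun j =>
    ((s (e.symm j)).min' (e.symm j).2, (s (e.symm j)).max' (e.symm j).2)
  have hsum : ∑ i, (∑ k ∈ s i, x k) ^ 2 = ∑ j, (∑ k ∈ Icc (f j).1 (f j).2, x k) ^ 2 := by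
    rw [← sum_filter_of_ne (p := fun i => (s i).Nonempty) fun i _ h => ?_,
      sum_subtype (p := fun i => (s i).Nonempty) _ (fun i => by simp) _, ← e.symm.sum_comp]
    · exact sum_congr rfl fun j _ => by rw [← eq_Icc_min'_max' (hconn _)]
    · exact nonempty_of_ne_empty fun h' => h (by simp [h'])
  have hmem := sqrt_sum_sq_mem_estimates (x := x) f
    (fun j => min'_le_max' _ (e.symm j).2)
    (fun j j' hjj' => max'_lt_min'_or_max'_lt_min' (hconn _) (hconn _)
      (hdisj fun h => hjj' (e.symm.injective (Subtype.ext h))) (e.symm j).2 (e.symm j').2)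
  rw [hsum]
  exact (Real.sqrt_le_iff.1 (le_csSup hx hmem)).2

theorem sum_sq_setSum_le_jamesNorm_sq (hx : MemJ x) {ι : Type*} [Fintype ι] (I : ι → Set ℕ)
    (hconn : ∀ i, (I i).OrdConnected) (hdisj : Pairwise (Disjoint on I))
    (hsum : ∀ i, ∃ l, Tendsto (fun N => ∑ k ∈ range N, if k ∈ I i then x k else 0) atTop (𝓝 l)) :
    ∑ i, setSum x (I i) ^ 2 ≤ jamesNorm x ^ 2 := by
  let trunc : ℕ → ι → Finset ℕ := fun N i => {k ∈ range N | k ∈ I i}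
  have htend : ∀ i, Tendsto (fun N => ∑ k ∈ trunc N i, x k) atTop (𝓝 (setSum x (I i))) := by
    intro i
    obtain ⟨l, hl⟩ := hsum i
    rw [show setSum x (I i) = l from hl.limUnder_eq]
    simpa only [trunc, sum_filter] using hl
  refine le_of_tendsto' (tendsto_finsetSum _ fun i _ => (htend i).pow 2) fun N =>
    sum_sq_sum_le_jamesNorm_sq hx (trunc N) (fun i => ?_) fun i j hij => ?_
  · have : (trunc N i : Set ℕ) = Set.Iio N ∩ I i := by ext; simp [trunc]
    exact this ▸ Set.ordConnected_Iio.inter (hconn i)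
  · exact disjoint_filter_filter' _ _ (hdisj hij)

-- The `Decidable` instance here is `Set.decidableSingleton`, not the classical one that
-- `setSum` and `NormingFamily` use, hence the `convert`s below.
lemma tendsto_sum_range_ite_mem_singleton (x : ℕ → ℝ) (n : ℕ) :
    Tendsto (fun N => ∑ k ∈ range N, if k ∈ ({n} : Set ℕ) then x k else 0) atTop (𝓝 (x n)) :=
  tendsto_atTop_of_eventually_const (i₀ := n + 1) fun N hN => by
    simp [Set.mem_singleton_iff, sum_ite_eq', Nat.lt_of_succ_le hN]

lemma setSum_singleton (x : ℕ → ℝ) (n : ℕ) : setSum x {n} = x n := by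
  unfold setSum
  convert (tendsto_sum_range_ite_mem_singleton x n).limUnder_eq

namespace NormingFamily

lemma disjoint (P : NormingFamily x) {i j : ℕ} (hi : i ∈ P.F) (hj : j ∈ P.F) (hij : i ≠ j) :
    Disjoint (P.I i) (P.I j) := by
  refine Set.disjoint_left.2 fun a hai haj => ?_
  rcases hij.lt_or_gt with h | h
  · exact lt_irrefl a (P.ordered i hi j hj h a hai a haj)
  · exact lt_irrefl a (P.ordered j hj i hi h a haj a hai)

lemma sq_add_sum_sq_setSum_le (P : NormingFamily x) (hx : MemJ x) {n : ℕ}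
    (hn : ∀ i ∈ P.F, n ∉ P.I i) (T : Finset P.F) :
    x n ^ 2 + ∑ i ∈ T, setSum x (P.I i) ^ 2 ≤ jamesNorm x ^ 2 := by
  let I : Option T → Set ℕ := fun o => o.elim {n} fun i => P.I i
  have := sum_sq_setSum_le_jamesNorm_sq hx I ?_ ?_ ?_
  · simpa only [Fintype.sum_option, I, Option.elim, setSum_singleton,
      sum_coe_sort T fun i => setSum x (P.I i) ^ 2] using this
  · rintro (_ | i)
    exacts [Set.ordConnected_singleton, P.I_interval _ i.1.2]
  · rintro (_ | i) (_ | j) hij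
    · exact absurd rfl hij
    · exact Set.disjoint_singleton_left.2 (hn _ j.1.2)
    · exact Set.disjoint_singleton_right.2 (hn _ i.1.2)
    · exact P.disjoint i.1.2 j.1.2 fun h => hij (congrArg some (Subtype.ext (Subtype.ext h)))
  · rintro (_ | i)
    exacts [⟨x n, by convert tendsto_sum_range_ite_mem_singleton x n; rfl⟩, P.sums_exist _ i.1.2]

end NormingFamily

theorem stmt6 (x : ℕ → ℝ) (hx : MemJ x) (P : NormingFamily x) :
    supp x ⊆ ⋃ i ∈ P.F, P.I i := by
  intro n hn
  by_contra hout
  simp only [Set.mem_iUnion, not_exists] at hout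
  have hbound := Real.tsum_le_of_sum_le (fun _ => sq_nonneg _) fun T =>
    le_sub_iff_add_le'.2 (P.sq_add_sum_sq_setSum_le hx hout T)
  rw [P.norming] at hbound
  exact hn (pow_eq_zero_iff two_ne_zero |>.1 (le_antisymm (by linarith) (sq_nonneg _)))
end
end

section
/- Let x ∈ J and let {Iᵢ}_{i∈F} be an x-norming family. For every i ∈ F and every n ∈ Iᵢ with x(n) ≠ 0, the three numbers ∑_{m∈Iᵢ} x(m), ∑_{m∈Iᵢ, m≤n} x(m), and ∑_{m∈Iᵢ, m≥n} x(m) are all nonzero and have the same sign. -/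
open Filter Topology Classical

/-!
Cutting one interval of a norming family into disjoint subintervals, and keeping the other
intervals, gives (after truncation) admissible families; as the family was already norming, the
squares of the sums of the pieces add up to at most the square of the sum over the whole interval.
Write the sum over `I i` as `S = a + x n + b`, with `a` and `b` the sums to the left and to the
right of `n`. The three cuts `(a + x n | b)`, `(a | x n + b)` and `(a | b)` give
`(a + x n)² + b² ≤ S²`, `a² + (x n + b)² ≤ S²` and `a² + b² ≤ S²`, and for `x n ≠ 0` these force
`S (a + x n) > 0` and `S (x n + b) > 0`.
-/

noncomputable def partialSum (x : ℕ → ℝ) (K : Set ℕ) (N : ℕ) : ℝ :=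
  ∑ k ∈ Finset.range N, if k ∈ K then x k else 0

theorem partialSum_inter_add_diff (x : ℕ → ℝ) (K L : Set ℕ) (N : ℕ) :
    partialSum x (K ∩ L) N + partialSum x (K \ L) N = partialSum x K N := by
  rw [partialSum, partialSum, partialSum, ← Finset.sum_add_distrib]
  refine Finset.sum_congr rfl fun k _ => ?_
  by_cases hK : k ∈ K <;> by_cases hL : k ∈ L <;> simp [hK, hL]

section PartialSum

variable {x : ℕ → ℝ}

theorem tendsto_partialSum_diff {K L : Set ℕ} {S a : ℝ}
    (hK : Tendsto (partialSum x K) atTop (𝓝 S))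
    (hKL : Tendsto (partialSum x (K ∩ L)) atTop (𝓝 a)) :
    Tendsto (partialSum x (K \ L)) atTop (𝓝 (S - a)) :=
  (hK.sub hKL).congr fun N => by linarith [partialSum_inter_add_diff x K L N]

theorem tendsto_partialSum_of_subset_Iio {K : Set ℕ} {M : ℕ} (hK : K ⊆ Set.Iio M) :
    Tendsto (partialSum x K) atTop (𝓝 (partialSum x K M)) := by
  refine tendsto_const_nhds.congr' ?_
  filter_upwards [eventually_ge_atTop M] with N hN
  exact Finset.sum_subset (Finset.range_subset_range.2 hN)
    fun k _ hk => if_neg fun hkK => hk (Finset.mem_range.2 (hK hkK))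

theorem partialSum_inter_Iic_succ {K : Set ℕ} {n : ℕ} (hn : n ∈ K) :
    partialSum x (K ∩ Set.Iic n) (n + 1) = partialSum x (K ∩ Set.Iio n) n + x n := by
  rw [partialSum, Finset.sum_range_succ, if_pos ⟨hn, Set.mem_Iic.2 le_rfl⟩]
  congr 1
  refine Finset.sum_congr rfl fun k hk => ?_
  have hkn : k < n := Finset.mem_range.1 hk
  simp [hkn, hkn.le]

theorem setSum_eq_of_tendsto {K : Set ℕ} {l : ℝ} (h : Tendsto (partialSum x K) atTop (𝓝 l)) :
    setSum x K = l :=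
  h.limUnder_eq

end PartialSum

theorem Finset.eq_Icc_sInf_sSup_of_ordConnected {T : Finset ℕ} (hne : T.Nonempty)
    (hT : (T : Set ℕ).OrdConnected) : T = Finset.Icc (sInf (T : Set ℕ)) (sSup (T : Set ℕ)) := by
  ext k
  refine ⟨fun hk => Finset.mem_Icc.2 ⟨Nat.sInf_le hk, le_csSup T.bddAbove hk⟩, fun hk => ?_⟩
  have hne' := T.coe_nonempty.2 hne
  exact hT.out (Nat.sInf_mem hne') (Nat.sSup_mem hne' T.bddAbove) (Finset.mem_Icc.1 hk)

section JamesNorm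

variable {x : ℕ → ℝ}

theorem sum_sq_le_jamesNorm_sq_of_admissible (hx : MemJ x) {m : ℕ} {f : Fin m → ℕ × ℕ}
    (hf : Admissible m f) : ∑ k, (∑ j ∈ Finset.Icc (f k).1 (f k).2, x j) ^ 2 ≤ jamesNorm x ^ 2 :=
  (Real.sqrt_le_left (le_csSup hx ⟨0, Fin.elim0, ⟨fun i => i.elim0, fun i => i.elim0⟩, by simp⟩)).1
    (le_csSup hx ⟨m, f, hf, rfl⟩)

theorem sum_sq_le_jamesNorm_sq_of_pairwiseDisjoint_Icc {ι : Type*} (hx : MemJ x) (G : Finset ι)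
    (a b : ι → ℕ) (hab : ∀ t ∈ G, a t ≤ b t)
    (hd : (G : Set ι).PairwiseDisjoint fun t => Finset.Icc (a t) (b t)) :
    ∑ t ∈ G, (∑ k ∈ Finset.Icc (a t) (b t), x k) ^ 2 ≤ jamesNorm x ^ 2 := by
  have hinj : Set.InjOn (fun t => toLex (a t, b t)) G := fun t ht u hu h => by
    simp only [toLex_inj, Prod.mk.injEq] at h
    refine hd.elim ht hu (Finset.not_disjoint_iff.2 ⟨a t, ?_, ?_⟩) <;>
      simp [h.1, h.2, hab u hu]
  set U := G.image fun t => toLex (a t, b t)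
  set e := U.orderIsoOfFin rfl
  have hmem : ∀ k, ∃ t ∈ G, toLex (a t, b t) = e k := fun k => Finset.mem_image.1 (e k).2
  choose g hgG hg using hmem
  have hofLex : ∀ k, ofLex (e k : ℕ ×ₗ ℕ) = (a (g k), b (g k)) := fun k => by rw [← hg]; rfl
  have hadm : Admissible U.card fun k => ofLex (e k : ℕ ×ₗ ℕ) := by
    refine ⟨fun k => by simpa [hofLex] using hab _ (hgG k), fun k l hkl => ?_⟩
    have hlt : toLex (a (g k), b (g k)) < toLex (a (g l), b (g l)) := by
      rw [hg, hg]; exact e.strictMono hkl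
    have hne : g k ≠ g l := fun h => hlt.ne (by rw [h])
    have ha : a (g k) ≤ a (g l) := by
      rcases Prod.Lex.lt_iff.1 hlt with h | ⟨h, _⟩ <;> simp only [ofLex_toLex] at h <;> omega
    simp only [hofLex]
    by_contra hle
    exact hne (hd.elim (hgG k) (hgG l) (Finset.not_disjoint_iff.2 ⟨a (g l),
      Finset.mem_Icc.2 ⟨ha, not_lt.1 hle⟩, Finset.mem_Icc.2 ⟨le_rfl, hab _ (hgG l)⟩⟩))
  calc ∑ t ∈ G, (∑ k ∈ Finset.Icc (a t) (b t), x k) ^ 2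
      = ∑ p ∈ U, (∑ k ∈ Finset.Icc (ofLex p).1 (ofLex p).2, x k) ^ 2 :=
        (Finset.sum_image (f := fun p : ℕ ×ₗ ℕ =>
          (∑ k ∈ Finset.Icc (ofLex p).1 (ofLex p).2, x k) ^ 2) hinj).symm
    _ = ∑ k, (∑ j ∈ Finset.Icc (ofLex (e k : ℕ ×ₗ ℕ)).1 (ofLex (e k : ℕ ×ₗ ℕ)).2, x j) ^ 2 := by
      rw [← Finset.sum_coe_sort U, ← e.toEquiv.sum_comp]; rfl
    _ ≤ jamesNorm x ^ 2 := sum_sq_le_jamesNorm_sq_of_admissible hx hadm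

theorem sum_sq_le_jamesNorm_sq_of_pairwiseDisjoint {ι : Type*} (hx : MemJ x) (G : Finset ι)
    (T : ι → Finset ℕ) (hT : ∀ t ∈ G, (T t : Set ℕ).OrdConnected)
    (hd : (G : Set ι).PairwiseDisjoint T) :
    ∑ t ∈ G, (∑ k ∈ T t, x k) ^ 2 ≤ jamesNorm x ^ 2 := by
  rw [← Finset.sum_filter_of_ne (p := fun t => (T t).Nonempty) fun t _ h =>
    Finset.nonempty_of_sum_ne_zero (ne_zero_pow two_ne_zero h)]
  have hIcc : ∀ t ∈ G.filter fun t => (T t).Nonempty,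
      T t = Finset.Icc (sInf (T t : Set ℕ)) (sSup (T t : Set ℕ)) := fun t ht =>
    have ht := Finset.mem_filter.1 ht
    Finset.eq_Icc_sInf_sSup_of_ordConnected ht.2 (hT t ht.1)
  rw [Finset.sum_congr rfl fun t ht => by rw [hIcc t ht]]
  refine sum_sq_le_jamesNorm_sq_of_pairwiseDisjoint_Icc hx _ _ _ (fun t ht => ?_) ?_
  · obtain ⟨k, hk⟩ := (Finset.mem_filter.1 ht).2
    rw [hIcc t ht, Finset.mem_Icc] at hk
    exact hk.1.trans hk.2
  · intro t ht u hu htu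
    have h : Disjoint (T t) (T u) := hd (Finset.mem_filter.1 ht).1 (Finset.mem_filter.1 hu).1 htu
    rwa [hIcc t ht, hIcc u hu] at h

theorem sum_sq_le_jamesNorm_sq_of_tendsto {ι : Type*} (hx : MemJ x) (G : Finset ι)
    (K : ι → Set ℕ) (s : ι → ℝ) (hK : ∀ t ∈ G, (K t).OrdConnected)
    (hd : (G : Set ι).PairwiseDisjoint K)
    (hs : ∀ t ∈ G, Tendsto (partialSum x (K t)) atTop (𝓝 (s t))) :
    ∑ t ∈ G, s t ^ 2 ≤ jamesNorm x ^ 2 := by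
  refine le_of_tendsto' (tendsto_finsetSum _ fun t ht => (hs t ht).pow 2) fun N => ?_
  have hfilter : ∀ t, partialSum x (K t) N = ∑ k ∈ (Finset.range N).filter (· ∈ K t), x k :=
    fun t => (Finset.sum_filter _ _).symm
  simp only [hfilter]
  refine sum_sq_le_jamesNorm_sq_of_pairwiseDisjoint hx G _ (fun t ht => ⟨?_⟩) ?_
  · intro a ha b hb k hk
    simp only [Finset.coe_filter, Finset.mem_range, Set.mem_ofPred_eq] at ha hb ⊢
    exact ⟨hk.2.trans_lt hb.1, (hK t ht).out ha.2 hb.2 hk⟩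
  · intro t ht u hu htu
    exact Finset.disjoint_left.2 fun k hk hk' => Set.disjoint_left.1 (hd ht hu htu)
      (Finset.mem_filter.1 hk).2 (Finset.mem_filter.1 hk').2

end JamesNorm

theorem le_of_forall_sum_erase_add_le_tsum {β : Type*} [DecidableEq β] {f : β → ℝ} (hf : 0 ≤ f)
    (i : β) {c : ℝ} (h : ∀ u : Finset β, ∑ j ∈ u.erase i, f j + c ≤ ∑' j, f j) : c ≤ f i := by
  have hsum : ∀ u : Finset β, ∑ j ∈ u, f j ≤ ∑' j, f j - c + f i := fun u =>
    calc ∑ j ∈ u, f j ≤ ∑ j ∈ insert i u, f j :=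
          Finset.sum_le_sum_of_subset_of_nonneg (Finset.subset_insert i u) fun j _ _ => hf j
      _ = ∑ j ∈ u.erase i, f j + f i := by
          rw [← Finset.sum_erase_add _ _ (Finset.mem_insert_self i u), Finset.erase_insert_eq_erase]
      _ ≤ ∑' j, f j - c + f i := by linarith [h u]
  linarith [(summable_of_sum_le hf hsum).tsum_le_of_sum_le hsum]

namespace NormingFamily

variable {x : ℕ → ℝ} (P : NormingFamily x)

theorem disjoint_I {i j : ℕ} (hi : i ∈ P.F) (hj : j ∈ P.F) (hij : i ≠ j) :
    Disjoint (P.I i) (P.I j) := by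
  rcases hij.lt_or_gt with h | h
  · exact Set.disjoint_left.2 fun a ha hb => (P.ordered i hi j hj h a ha a hb).false
  · exact Set.disjoint_right.2 fun a hb ha => (P.ordered j hj i hi h a hb a ha).false

theorem tendsto_partialSum {i : ℕ} (hi : i ∈ P.F) :
    Tendsto (partialSum x (P.I i)) atTop (𝓝 (setSum x (P.I i))) := by
  obtain ⟨l, hl⟩ := P.sums_exist i hi
  rwa [setSum_eq_of_tendsto hl]

theorem sum_sq_le_setSum_sq {κ : Type*} (hx : MemJ x) {i : ℕ} (hi : i ∈ P.F) (H : Finset κ)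
    (Q : κ → Set ℕ) (t : κ → ℝ) (hQI : ∀ k ∈ H, Q k ⊆ P.I i) (hQ : ∀ k ∈ H, (Q k).OrdConnected)
    (hd : (H : Set κ).PairwiseDisjoint Q)
    (ht : ∀ k ∈ H, Tendsto (partialSum x (Q k)) atTop (𝓝 (t k))) :
    ∑ k ∈ H, t k ^ 2 ≤ setSum x (P.I i) ^ 2 := by
  refine le_of_forall_sum_erase_add_le_tsum (f := fun j : P.F => setSum x (P.I j) ^ 2)
    (fun _ => sq_nonneg _) ⟨i, hi⟩ fun u => ?_
  rw [P.norming]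
  refine (Finset.sum_disjSum (u.erase ⟨i, hi⟩) H
    fun p => Sum.elim (fun j : P.F => setSum x (P.I j)) t p ^ 2).symm.trans_le ?_
  refine sum_sq_le_jamesNorm_sq_of_tendsto hx _ (Sum.elim (fun j : P.F => P.I j) Q) _ ?_ ?_ ?_
  · rintro (j | k) hp
    · exact P.I_interval j j.2
    · exact hQ k (Finset.inr_mem_disjSum.1 hp)
  · rintro (j | k) hp (j' | k') hq hpq
    · exact P.disjoint_I j.2 j'.2 fun h => hpq (congrArg Sum.inl (Subtype.ext h))
    · refine (P.disjoint_I j.2 hi fun h => ?_).mono_right (hQI k' (Finset.inr_mem_disjSum.1 hq))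
      exact (Finset.ne_of_mem_erase (Finset.inl_mem_disjSum.1 hp)) (Subtype.ext h)
    · refine ((P.disjoint_I j'.2 hi fun h => ?_).mono_right
        (hQI k (Finset.inr_mem_disjSum.1 hp))).symm
      exact (Finset.ne_of_mem_erase (Finset.inl_mem_disjSum.1 hq)) (Subtype.ext h)
    · exact hd (Finset.inr_mem_disjSum.1 hp) (Finset.inr_mem_disjSum.1 hq)
        fun h => hpq (congrArg Sum.inr h)
  · rintro (j | k) hp
    · exact P.tendsto_partialSum j.2
    · exact ht k (Finset.inr_mem_disjSum.1 hp)

theorem sq_add_sq_le_setSum_sq (hx : MemJ x) {i : ℕ} (hi : i ∈ P.F) {L₁ L₂ : Set ℕ} {t₁ t₂ : ℝ}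
    (hL₁ : L₁.OrdConnected) (hL₂ : L₂.OrdConnected) (hd : Disjoint L₁ L₂)
    (ht₁ : Tendsto (partialSum x (P.I i ∩ L₁)) atTop (𝓝 t₁))
    (ht₂ : Tendsto (partialSum x (P.I i ∩ L₂)) atTop (𝓝 t₂)) :
    t₁ ^ 2 + t₂ ^ 2 ≤ setSum x (P.I i) ^ 2 := by
  have hI := P.I_interval i hi
  have h := P.sum_sq_le_setSum_sq hx hi Finset.univ ![P.I i ∩ L₁, P.I i ∩ L₂] ![t₁, t₂] ?_ ?_ ?_ ?_
  · simpa using h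
  · intro k _; fin_cases k <;> exact Set.inter_subset_left
  · intro k _; fin_cases k; exacts [hI.inter hL₁, hI.inter hL₂]
  · intro k _ l _ hkl
    have hd' := hd.mono (Set.inter_subset_right (s := P.I i)) (Set.inter_subset_right (s := P.I i))
    fin_cases k <;> fin_cases l
    exacts [absurd rfl hkl, hd', hd'.symm, absurd rfl hkl]
  · intro k _; fin_cases k; exacts [ht₁, ht₂]

end NormingFamily

theorem mul_pos_of_sq_add_sq_le_sq {S a c : ℝ} (hc : c ≠ 0)
    (h₁ : (a + c) ^ 2 + (S - (a + c)) ^ 2 ≤ S ^ 2) (h₂ : a ^ 2 + (S - a) ^ 2 ≤ S ^ 2)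
    (h₃ : a ^ 2 + (S - (a + c)) ^ 2 ≤ S ^ 2) : 0 < S * (a + c) ∧ 0 < S * (S - a) := by
  have hc2 : 0 < c ^ 2 := by positivity
  constructor <;> nlinarith

theorem stmt8 (x : ℕ → ℝ) (hx : MemJ x) (P : NormingFamily x)
    (i : ℕ) (hi : i ∈ P.F) (n : ℕ) (hn : n ∈ P.I i) (hxn : x n ≠ 0) :
    setSum x (P.I i) ≠ 0 ∧ setSum x (P.I i ∩ Set.Iic n) ≠ 0 ∧
      setSum x (P.I i ∩ Set.Ici n) ≠ 0 ∧
      0 < setSum x (P.I i) * setSum x (P.I i ∩ Set.Iic n) ∧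
      0 < setSum x (P.I i) * setSum x (P.I i ∩ Set.Ici n) := by
  have hS := P.tendsto_partialSum hi
  have hL : Tendsto (partialSum x (P.I i ∩ Set.Iio n)) atTop
      (𝓝 (partialSum x (P.I i ∩ Set.Iio n) n)) :=
    tendsto_partialSum_of_subset_Iio fun k hk => hk.2
  have hLn : Tendsto (partialSum x (P.I i ∩ Set.Iic n)) atTop
      (𝓝 (partialSum x (P.I i ∩ Set.Iio n) n + x n)) := by
    rw [← partialSum_inter_Iic_succ hn]
    exact tendsto_partialSum_of_subset_Iio fun k hk => Nat.lt_succ_of_le hk.2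
  have hnR := tendsto_partialSum_diff hS hL
  have hR := tendsto_partialSum_diff hS hLn
  rw [Set.sdiff_eq, Set.compl_Iio] at hnR
  rw [Set.sdiff_eq, Set.compl_Iic] at hR
  have h₁ := P.sq_add_sq_le_setSum_sq hx hi Set.ordConnected_Iic Set.ordConnected_Ioi
    (Set.Iic_disjoint_Ioi le_rfl) hLn hR
  have h₂ := P.sq_add_sq_le_setSum_sq hx hi Set.ordConnected_Iio Set.ordConnected_Ici
    (Set.Iio_disjoint_Ici le_rfl) hL hnR
  have h₃ := P.sq_add_sq_le_setSum_sq hx hi Set.ordConnected_Iio Set.ordConnected_Ioi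
    ((Set.Iio_disjoint_Ici le_rfl).mono_right Set.Ioi_subset_Ici_self) hL hR
  obtain ⟨hpos₁, hpos₂⟩ := mul_pos_of_sq_add_sq_le_sq hxn h₁ h₂ h₃
  rw [setSum_eq_of_tendsto hLn, setSum_eq_of_tendsto hnR]
  exact ⟨left_ne_zero_of_mul hpos₁.ne', right_ne_zero_of_mul hpos₁.ne',
    right_ne_zero_of_mul hpos₂.ne', hpos₁, hpos₂⟩
end

section
/- Let x ∈ J, x ≠ 0, and let 𝓘 = {Iᵢ}_{i∈F} and 𝓛 = {Lⱼ}_{j∈G} be two x-norming partitions. Then for every i ∈ F and j ∈ G, either Iᵢ ⊆ Lⱼ, or Lⱼ ⊆ Iᵢ, or Iᵢ ∩ Lⱼ = ∅. -/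
open Filter Topology Classical

/-!
Let `M c = sqNormBelow x c` be the squared James norm of `x` restricted to `[0, c)`. It is
superadditive, `M c + (∑_{c ≤ k < d} x k)² ≤ M d`, and along a norming partition it is additive:
at the first point of a block it equals the sum of the squared sums of the earlier blocks.
Suppose a block `[a, q]` of one norming partition crosses a block `[m, p]` of another,
`a < m ≤ q < p`, and let `U, V, W` be the sums of `x` over `[a, m)`, `[m, q]`, `(q, p]`.
Optimality of the two blocks bounds the increments of `M` between `a, m, q + 1, p + 1` from above
by `(U + V)²` and `(V + W)²`, superadditivity bounds them from below; since the endpoints `a`, `m`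
and a point of `(q, p]` lie in the support, the increments are positive, which forces `U V > 0`
and `V W > 0`, while comparing with the single interval `[a, p]` gives `U W ≤ 0`.
-/

theorem Set.OrdConnected.mem_Ioo_of_mem_diff {α : Type*} [LinearOrder α] {s t : Set α}
    (hs : s.OrdConnected) (ht : t.OrdConnected) {a b y : α} (hy : y ∈ s ∩ t)
    (ha : a ∈ s \ t) (hb : b ∈ t \ s) : y ∈ Set.Ioo a b ∨ y ∈ Set.Ioo b a := by
  have hay : a ≠ y := fun h => ha.2 (h ▸ hy.2)
  have hby : b ≠ y := fun h => hb.2 (h ▸ hy.1)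
  rcases hay.lt_or_gt with hay | hay <;> rcases hby.lt_or_gt with hby | hby
  · rcases le_total a b with hab | hab
    · exact absurd (hs.out ha.1 hy.1 ⟨hab, hby.le⟩) hb.2
    · exact absurd (ht.out hb.1 hy.2 ⟨hab, hay.le⟩) ha.2
  · exact .inl ⟨hay, hby⟩
  · exact .inr ⟨hby, hay⟩
  · rcases le_total a b with hab | hab
    · exact absurd (ht.out hy.2 hb.1 ⟨hay.le, hab⟩) ha.2
    · exact absurd (hs.out hy.1 ha.1 ⟨hby.le, hab⟩) hb.2

section

open Finset

variable {x : ℕ → ℝ}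

def AdmissibleList (l : List (ℕ × ℕ)) : Prop :=
  l.Pairwise (fun p q => p.2 < q.1) ∧ ∀ p ∈ l, p.1 ≤ p.2

def jamesSum (x : ℕ → ℝ) (l : List (ℕ × ℕ)) : ℝ :=
  (l.map fun p => (∑ k ∈ Icc p.1 p.2, x k) ^ 2).sum

theorem AdmissibleList.append_singleton {l : List (ℕ × ℕ)} {a b : ℕ} (hl : AdmissibleList l)
    (hla : ∀ p ∈ l, p.2 < a) (hab : a ≤ b) : AdmissibleList (l ++ [(a, b)]) := by
  refine ⟨List.pairwise_append.2 ⟨hl.1, List.pairwise_singleton _ _, ?_⟩, ?_⟩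
  · simpa using hla
  · simp only [List.mem_append, List.mem_singleton]
    rintro p (hp | rfl)
    exacts [hl.2 p hp, hab]

theorem jamesSum_append_singleton (l : List (ℕ × ℕ)) (a b : ℕ) :
    jamesSum x (l ++ [(a, b)]) = jamesSum x l + (∑ k ∈ Icc a b, x k) ^ 2 := by
  simp [jamesSum]

theorem jamesSum_nonneg (l : List (ℕ × ℕ)) : 0 ≤ jamesSum x l :=
  List.sum_nonneg fun _ h => by
    obtain ⟨p, -, rfl⟩ := List.mem_map.1 h
    positivity

theorem jamesSum_le_sq_jamesNorm (hx : MemJ x) {l : List (ℕ × ℕ)} (hl : AdmissibleList l) :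
    jamesSum x l ≤ jamesNorm x ^ 2 := by
  have hmem : Real.sqrt (jamesSum x l) ∈ estimates x := by
    refine ⟨l.length, fun i => l[i.1], ⟨fun i => hl.2 _ (List.getElem_mem _),
      fun i j hij => List.pairwise_iff_getElem.1 hl.1 _ _ _ _ hij⟩, ?_⟩
    rw [jamesSum, ← Fin.sum_univ_fun_getElem]
  rw [← Real.sq_sqrt (jamesSum_nonneg l)]
  exact pow_le_pow_left₀ (Real.sqrt_nonneg _) (le_csSup hx hmem) 2

noncomputable def sqNormBelow (x : ℕ → ℝ) (c : ℕ) : ℝ :=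
  sSup (jamesSum x '' {l | AdmissibleList l ∧ ∀ p ∈ l, p.2 < c})

theorem jamesSum_le_sqNormBelow (hx : MemJ x) {l : List (ℕ × ℕ)} {c : ℕ}
    (hl : AdmissibleList l) (hlc : ∀ p ∈ l, p.2 < c) : jamesSum x l ≤ sqNormBelow x c := by
  refine le_csSup ⟨jamesNorm x ^ 2, ?_⟩ ⟨l, ⟨hl, hlc⟩, rfl⟩
  rintro _ ⟨l', ⟨hl', -⟩, rfl⟩
  exact jamesSum_le_sq_jamesNorm hx hl'

theorem sqNormBelow_le {c : ℕ} {b : ℝ}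
    (h : ∀ l, AdmissibleList l → (∀ p ∈ l, p.2 < c) → jamesSum x l ≤ b) :
    sqNormBelow x c ≤ b := by
  refine csSup_le ⟨0, [], ⟨⟨List.Pairwise.nil, by simp⟩, by simp⟩, rfl⟩ ?_
  rintro _ ⟨l, ⟨hl, hlc⟩, rfl⟩
  exact h l hl hlc

theorem sqNormBelow_nonneg (hx : MemJ x) (c : ℕ) : 0 ≤ sqNormBelow x c :=
  jamesSum_le_sqNormBelow (l := []) hx ⟨List.Pairwise.nil, by simp⟩ (by simp)

theorem sqNormBelow_le_sq_jamesNorm (hx : MemJ x) (c : ℕ) :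
    sqNormBelow x c ≤ jamesNorm x ^ 2 :=
  sqNormBelow_le fun _ hl _ => jamesSum_le_sq_jamesNorm hx hl

theorem sqNormBelow_add_sq_le (hx : MemJ x) {c d : ℕ} (hcd : c ≤ d) :
    sqNormBelow x c + (∑ k ∈ Ico c d, x k) ^ 2 ≤ sqNormBelow x d := by
  rcases hcd.eq_or_lt with rfl | hcd
  · simp
  rw [← le_sub_iff_add_le]
  refine sqNormBelow_le fun l hl hlc => le_sub_iff_add_le.2 ?_
  have hIcc : Icc c (d - 1) = Ico c d := by
    rw [← Ico_add_one_right_eq_Icc, Nat.sub_add_cancel (by omega)]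
  rw [← hIcc, ← jamesSum_append_singleton]
  refine jamesSum_le_sqNormBelow hx (hl.append_singleton hlc (by omega)) ?_
  simp only [List.mem_append, List.mem_singleton]
  rintro p (hp | rfl)
  · exact (hlc p hp).trans hcd
  · exact Nat.sub_lt (by omega) one_pos

theorem sqNormBelow_mono (hx : MemJ x) : Monotone (sqNormBelow x) := fun _ _ h =>
  le_of_add_le_of_nonneg_left (sqNormBelow_add_sq_le hx h) (sq_nonneg _)

theorem sqNormBelow_lt (hx : MemJ x) {c k d : ℕ} (hck : c ≤ k) (hk : x k ≠ 0) (hkd : k < d) :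
    sqNormBelow x c < sqNormBelow x d := by
  have h := sqNormBelow_add_sq_le hx (Nat.le_succ k)
  rw [Nat.Ico_succ_singleton, sum_singleton] at h
  linarith [sqNormBelow_mono hx hck, sqNormBelow_mono hx hkd, sq_pos_of_ne_zero hk]

theorem sum_range_ite_mem {I : Set ℕ} {s : Finset ℕ} {T : ℕ} (hs : ∀ k, k ∈ s ↔ k < T ∧ k ∈ I) :
    (∑ k ∈ range T, if k ∈ I then x k else 0) = ∑ k ∈ s, x k := by
  rw [← sum_filter]
  congr 1
  ext k
  rw [mem_filter, mem_range, hs]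

namespace NormingPartition

variable (B : NormingPartition x)

noncomputable def first (r : ℕ) : ℕ := sInf (B.I r)

noncomputable def last (r : ℕ) : ℕ := sSup (B.I r)

noncomputable def blockSq : ℕ → ℝ := B.F.indicator fun r => setSum x (B.I r) ^ 2

noncomputable def headSum (n : ℕ) : ℝ := ∑ r ∈ range n, B.blockSq r

variable {B} {r : ℕ}

theorem first_mem (hr : r ∈ B.F) : B.first r ∈ B.I r := Nat.sInf_mem (B.I_nonempty r hr)

theorem first_le {k : ℕ} (hk : k ∈ B.I r) : B.first r ≤ k := Nat.sInf_le hk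

theorem last_mem (hr : r ∈ B.F) (hb : BddAbove (B.I r)) : B.last r ∈ B.I r :=
  Nat.sSup_mem (B.I_nonempty r hr) hb

theorem le_last (hb : BddAbove (B.I r)) {k : ℕ} (hk : k ∈ B.I r) : k ≤ B.last r := le_csSup hb hk

theorem eq_Icc (hr : r ∈ B.F) (hb : BddAbove (B.I r)) :
    B.I r = Set.Icc (B.first r) (B.last r) :=
  Set.Subset.antisymm (fun _ hk => ⟨first_le hk, le_last hb hk⟩)
    ((B.I_interval r hr).out (first_mem hr) (last_mem hr hb))

theorem eq_Ici (hr : r ∈ B.F) (hb : ¬BddAbove (B.I r)) : B.I r = Set.Ici (B.first r) := by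
  refine Set.Subset.antisymm (fun _ hk => first_le hk) fun k hk => ?_
  obtain ⟨e, he, hke⟩ := not_bddAbove_iff.1 hb k
  exact (B.I_interval r hr).out (first_mem hr) he ⟨hk, hke.le⟩

theorem not_lt_of_not_bddAbove (hr : r ∈ B.F) (hb : ¬BddAbove (B.I r)) {r' : ℕ}
    (hr' : r' ∈ B.F) : ¬r < r' := fun hrr' => by
  obtain ⟨e, he⟩ := B.I_nonempty r' hr'
  have he' : e ∈ B.I r := by
    rw [eq_Ici hr hb]
    exact (B.ordered r hr r' hr' hrr' _ (first_mem hr) e he).le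
  exact lt_irrefl e (B.ordered r hr r' hr' hrr' e he' e he)

theorem setSum_eq_sum_Ico (hr : r ∈ B.F) (hb : BddAbove (B.I r)) :
    setSum x (B.I r) = ∑ k ∈ Ico (B.first r) (B.last r + 1), x k := by
  refine Tendsto.limUnder_eq (tendsto_atTop_of_eventually_const (i₀ := B.last r + 1)
    fun T hT => sum_range_ite_mem fun k => ?_)
  rw [eq_Icc hr hb, mem_Ico, Set.mem_Icc]
  omega

theorem tendsto_sum_Ico_setSum (hr : r ∈ B.F) (hb : ¬BddAbove (B.I r)) :
    Tendsto (fun T => ∑ k ∈ Ico (B.first r) T, x k) atTop (𝓝 (setSum x (B.I r))) := by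
  refine (tendsto_nhds_limUnder (B.sums_exist r hr)).congr fun T => sum_range_ite_mem fun k => ?_
  rw [eq_Ici hr hb, mem_Ico, Set.mem_Ici, and_comm]

theorem x_first_ne_zero (hr : r ∈ B.F) : x (B.first r) ≠ 0 := by
  obtain ⟨m, ⟨hm, hmx⟩, hmin⟩ := B.min_in_supp r hr
  rwa [le_antisymm (hmin _ (first_mem hr)) (first_le hm)] at hmx

theorem exists_le_mem_ne_zero {b : ℕ} (hr : r ∈ B.F) (hb : b ∈ B.I r) :
    ∃ z ∈ B.I r, b ≤ z ∧ x z ≠ 0 := by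
  obtain ⟨m, hmx, hbm⟩ := B.bounded_by_supp r hr b hb
  obtain ⟨r', hr', hm⟩ := Set.mem_iUnion₂.1 (B.covers hmx)
  rcases lt_trichotomy r' r with hlt | rfl | hlt
  · exact absurd (B.ordered r' hr' r hr hlt m hm b hb) (by omega)
  · exact ⟨m, hm, hbm, hmx⟩
  · obtain ⟨z, ⟨hz, hzx⟩, hmax⟩ := B.max_in_supp r hr ⟨r', hr', hlt⟩
    exact ⟨z, hz, hmax b hb, hzx⟩

theorem blockSq_nonneg (r : ℕ) : 0 ≤ B.blockSq r :=
  Set.indicator_nonneg (fun _ _ => sq_nonneg _) r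

theorem blockSq_of_mem (hr : r ∈ B.F) : B.blockSq r = setSum x (B.I r) ^ 2 :=
  Set.indicator_of_mem hr _

theorem sqNormBelow_add_blockSq_le (hx : MemJ x) (hr : r ∈ B.F) (hb : BddAbove (B.I r))
    {c : ℕ} (hc : c ≤ B.first r) :
    sqNormBelow x c + B.blockSq r ≤ sqNormBelow x (B.last r + 1) := by
  rw [blockSq_of_mem hr, setSum_eq_sum_Ico hr hb]
  have hfl : B.first r ≤ B.last r + 1 := (first_le (last_mem hr hb)).trans (Nat.le_add_right _ 1)
  linarith [sqNormBelow_mono hx hc, sqNormBelow_add_sq_le hx hfl]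

theorem sqNormBelow_add_blockSq_le_of_not_bddAbove (hx : MemJ x) (hr : r ∈ B.F)
    (hb : ¬BddAbove (B.I r)) {c : ℕ} (hc : c ≤ B.first r) :
    sqNormBelow x c + B.blockSq r ≤ jamesNorm x ^ 2 := by
  rw [blockSq_of_mem hr]
  refine le_of_tendsto (((tendsto_sum_Ico_setSum hr hb).pow 2).const_add _)
    (eventually_atTop.2 ⟨B.first r, fun T hT => ?_⟩)
  linarith [sqNormBelow_mono hx hc, sqNormBelow_add_sq_le hx hT, sqNormBelow_le_sq_jamesNorm hx T]

theorem sqNormBelow_add_sum_blockSq_le (hx : MemJ x) (k : ℕ) : ∀ n c : ℕ,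
    (∀ r ∈ B.F, n ≤ r → ∀ e ∈ B.I r, c ≤ e) →
    sqNormBelow x c + ∑ r ∈ range k, B.blockSq (r + n) ≤ jamesNorm x ^ 2 := by
  induction k with
  | zero => simpa using fun _ c _ => sqNormBelow_le_sq_jamesNorm hx c
  | succ k ih =>
    intro n c hc
    have ih' := ih (n + 1)
    simp only [← add_assoc] at ih'
    rw [sum_range_succ', zero_add]
    simp only [add_right_comm _ 1 n]
    by_cases hn : n ∈ B.F
    · by_cases hb : BddAbove (B.I n)
      · have h1 := sqNormBelow_add_blockSq_le hx hn hb (hc n hn le_rfl _ (first_mem hn))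
        have h2 := ih' (B.last n + 1) fun r hr hnr e he =>
          B.ordered n hn r hr (by omega) _ (last_mem hn hb) e he
        linarith
      · have hrest : ∑ r ∈ range k, B.blockSq (r + n + 1) = 0 :=
          sum_eq_zero fun r _ =>
            Set.indicator_of_notMem (fun h => not_lt_of_not_bddAbove hn hb h (by omega)) _
        rw [hrest, zero_add]
        exact sqNormBelow_add_blockSq_le_of_not_bddAbove hx hn hb (hc n hn le_rfl _ (first_mem hn))
    · rw [show B.blockSq n = 0 from Set.indicator_of_notMem hn _, add_zero]
      exact ih' c fun r hr hnr => hc r hr (by omega)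

theorem summable_blockSq (hx : MemJ x) : Summable B.blockSq :=
  summable_of_sum_range_le (c := jamesNorm x ^ 2) blockSq_nonneg fun k => by
    have h := B.sqNormBelow_add_sum_blockSq_le hx k 0 0 fun _ _ _ _ _ => Nat.zero_le _
    simp only [add_zero] at h
    linarith [sqNormBelow_nonneg hx 0]

theorem tsum_blockSq : ∑' r, B.blockSq r = jamesNorm x ^ 2 := by
  rw [← B.norming, tsum_subtype B.F fun r => setSum x (B.I r) ^ 2]
  rfl

theorem sqNormBelow_le_headSum (hx : MemJ x) {n c : ℕ}
    (hc : ∀ r ∈ B.F, n ≤ r → ∀ e ∈ B.I r, c ≤ e) : sqNormBelow x c ≤ B.headSum n := by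
  have htail : ∑' r, B.blockSq (r + n) ≤ jamesNorm x ^ 2 - sqNormBelow x c :=
    ((summable_nat_add_iff n).2 (B.summable_blockSq hx)).tsum_le_of_sum_range_le fun k =>
      le_sub_iff_add_le'.2 (B.sqNormBelow_add_sum_blockSq_le hx k n c hc)
  have hsplit := (B.summable_blockSq hx).sum_add_tsum_nat_add n
  rw [tsum_blockSq] at hsplit
  rw [headSum]
  linarith

theorem headSum_succ (n : ℕ) : B.headSum (n + 1) = B.headSum n + B.blockSq n :=
  sum_range_succ _ _

theorem headSum_le_sqNormBelow_first (hx : MemJ x) :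
    ∀ r ∈ B.F, B.headSum r ≤ sqNormBelow x (B.first r)
  | 0, _ => by simpa [headSum] using sqNormBelow_nonneg hx _
  | r + 1, hr1 => by
    have hr : r ∈ B.F := B.initial (Nat.le_succ r) hr1
    have hlt : ∀ k ∈ B.I r, k < B.first (r + 1) := fun k hk =>
      B.ordered r hr (r + 1) hr1 (Nat.lt_succ_self r) k hk _ (first_mem hr1)
    have hb : BddAbove (B.I r) := ⟨_, fun k hk => (hlt k hk).le⟩
    rw [headSum_succ]
    linarith [headSum_le_sqNormBelow_first hx r hr, sqNormBelow_add_blockSq_le hx hr hb le_rfl,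
      sqNormBelow_mono hx (hlt _ (last_mem hr hb))]

theorem sqNormBelow_first (hx : MemJ x) (hr : r ∈ B.F) :
    sqNormBelow x (B.first r) = B.headSum r := by
  refine le_antisymm (sqNormBelow_le_headSum hx fun r' hr' hrr' e he => ?_)
    (headSum_le_sqNormBelow_first hx r hr)
  rcases hrr'.eq_or_lt with rfl | hlt
  · exact first_le he
  · exact (B.ordered r hr r' hr' hlt _ (first_mem hr) e he).le

theorem headSum_succ_eq (hx : MemJ x) (hr : r ∈ B.F) :
    B.headSum (r + 1) = sqNormBelow x (B.first r) + setSum x (B.I r) ^ 2 := by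
  rw [headSum_succ, sqNormBelow_first hx hr, blockSq_of_mem hr]

theorem sqNormBelow_le_headSum_succ (hx : MemJ x) (hr : r ∈ B.F) {k c : ℕ} (hk : k ∈ B.I r)
    (hc : c ≤ k + 1) : sqNormBelow x c ≤ B.headSum (r + 1) :=
  sqNormBelow_le_headSum hx fun r' hr' hrr' e he => hc.trans (B.ordered r hr r' hr' hrr' k hk e he)

theorem sqNormBelow_add_sq_le_headSum_succ (hx : MemJ x) (hr : r ∈ B.F) {c d : ℕ} (hcd : c ≤ d)
    (hd : d ∈ B.I r) :
    sqNormBelow x c + (∑ k ∈ Ico c d, x k + (setSum x (B.I r) - ∑ k ∈ Ico (B.first r) d, x k)) ^ 2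
      ≤ B.headSum (r + 1) := by
  have hbound : ∀ k ∈ B.I r, d ≤ k →
      sqNormBelow x c + (∑ i ∈ Ico c (k + 1), x i) ^ 2 ≤ B.headSum (r + 1) := fun k hk hdk =>
    (sqNormBelow_add_sq_le hx (by omega)).trans (sqNormBelow_le_headSum_succ hx hr hk le_rfl)
  have hsplit : ∀ k, d ≤ k → ∑ i ∈ Ico c (k + 1), x i = ∑ i ∈ Ico c d, x i
      + (∑ i ∈ Ico (B.first r) (k + 1), x i - ∑ i ∈ Ico (B.first r) d, x i) := by
    intro k hdk
    rw [← sum_Ico_consecutive x hcd (by omega : d ≤ k + 1),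
      ← sum_Ico_consecutive x (first_le hd) (by omega : d ≤ k + 1)]
    ring
  by_cases hb : BddAbove (B.I r)
  · rw [setSum_eq_sum_Ico hr hb, ← hsplit _ (le_last hb hd)]
    exact hbound _ (last_mem hr hb) (le_last hb hd)
  · have hlim : Tendsto (fun k => ∑ i ∈ Ico c (k + 1), x i) atTop
        (𝓝 (∑ k ∈ Ico c d, x k + (setSum x (B.I r) - ∑ k ∈ Ico (B.first r) d, x k))) :=
      ((((tendsto_sum_Ico_setSum hr hb).comp (tendsto_add_atTop_nat 1)).sub_const _).const_add
        _).congr' (eventually_atTop.2 ⟨d, fun k hk => (hsplit k hk).symm⟩)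
    refine le_of_tendsto ((hlim.pow 2).const_add _) (eventually_atTop.2 ⟨d, fun k hdk => ?_⟩)
    rw [eq_Ici hr hb] at hbound
    exact hbound k ((first_le hd).trans hdk) hdk

end NormingPartition

-- For blocks `[a, q]` and `[m, p]` of two norming partitions with `a < m ≤ q < p`: `Ma, Mm, Mq`
-- are the values of `sqNormBelow x` at `a, m, q + 1`, `MT` is the sum of the squared block sums
-- up to `[m, p]`, and `U, V, Q` are the sums of `x` over `[a, m)`, `[m, q]`, `[m, p]`. The bounds
-- force `U V > 0` and `V (Q - V) > 0`, but also `U (Q - V) ≤ 0`.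
theorem false_of_crossing_estimates {Ma Mm Mq MT U V Q : ℝ}
    (hU : Ma + U ^ 2 ≤ Mm) (hV : Mm + V ^ 2 ≤ Mq) (hW : Mq + (Q - V) ^ 2 ≤ MT)
    (hUQ : Ma + (U + Q) ^ 2 ≤ MT) (hA : Mq ≤ Ma + (U + V) ^ 2) (hB : MT ≤ Mm + Q ^ 2)
    (ham : Ma < Mm) (hmq : Mm < Mq) (hqT : Mq < MT) : False := by
  have hUV : 0 < U * V := by nlinarith
  have hVW : 0 < V * (Q - V) := by nlinarith
  have hUW : 0 < U * (Q - V) := by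
    have := mul_pos hUV hVW
    nlinarith [sq_nonneg V]
  nlinarith

namespace NormingPartition

theorem not_crossing (hx : MemJ x) (A B : NormingPartition x) {i j a y b : ℕ} (hi : i ∈ A.F)
    (hj : j ∈ B.F) (ha : a ∈ A.I i \ B.I j) (hy : y ∈ A.I i ∩ B.I j) (hb : b ∈ B.I j \ A.I i)
    (hay : a < y) (hyb : y < b) : False := by
  have hbA : BddAbove (A.I i) := ⟨b, fun k hk => by
    by_contra! hbk
    exact hb.2 ((A.I_interval i hi).out hy.1 hk ⟨hyb.le, hbk.le⟩)⟩
  have ham : A.first i < B.first j := (first_le ha.1).trans_lt <| by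
    by_contra! hma
    exact ha.2 ((B.I_interval j hj).out (first_mem hj) hy.2 ⟨hma, hay.le⟩)
  have hmA : B.first j ∈ A.I i :=
    (A.I_interval i hi).out (first_mem hi) hy.1 ⟨ham.le, first_le hy.2⟩
  have hmq : B.first j < A.last i + 1 := Nat.lt_succ_of_le (le_last hbA hmA)
  have hqb : A.last i < b := by
    by_contra! hbq
    exact hb.2 ((A.I_interval i hi).out (first_mem hi) (last_mem hi hbA)
      ⟨(first_le hy.1).trans hyb.le, hbq⟩)
  obtain ⟨z, hz, hbz, hxz⟩ := B.exists_le_mem_ne_zero hj hb.1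
  have hq1 : A.last i + 1 ∈ B.I j := (B.I_interval j hj).out (first_mem hj) hz ⟨hmq.le, by omega⟩
  have hsetA : setSum x (A.I i) = ∑ k ∈ Ico (A.first i) (B.first j), x k
      + ∑ k ∈ Ico (B.first j) (A.last i + 1), x k := by
    rw [setSum_eq_sum_Ico hi hbA, sum_Ico_consecutive x ham.le hmq.le]
  have hA : sqNormBelow x (A.last i + 1) ≤ sqNormBelow x (A.first i) + setSum x (A.I i) ^ 2 := by
    rw [← A.headSum_succ_eq hx hi]
    exact A.sqNormBelow_le_headSum_succ hx hi (last_mem hi hbA) le_rfl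
  have hqT : sqNormBelow x (A.last i + 1) < B.headSum (j + 1) :=
    (sqNormBelow_lt hx (by omega) hxz (Nat.lt_succ_self z)).trans_le
      (B.sqNormBelow_le_headSum_succ hx hj hz le_rfl)
  have hUQ := B.sqNormBelow_add_sq_le_headSum_succ hx hj ham.le (first_mem hj)
  have hW := B.sqNormBelow_add_sq_le_headSum_succ hx hj le_rfl hq1
  simp only [Ico_self, sum_empty, sub_zero, zero_add] at hUQ hW
  rw [hsetA] at hA
  exact false_of_crossing_estimates (sqNormBelow_add_sq_le hx ham.le)
    (sqNormBelow_add_sq_le hx hmq.le) hW hUQ hA (B.headSum_succ_eq hx hj).le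
    (sqNormBelow_lt hx le_rfl (x_first_ne_zero hi) ham)
    (sqNormBelow_lt hx le_rfl (x_first_ne_zero hj) hmq) hqT

end NormingPartition

end

theorem stmt14_general (x : ℕ → ℝ) (hx : MemJ x)
    (P Q : NormingPartition x) (i : ℕ) (hi : i ∈ P.F) (j : ℕ) (hj : j ∈ Q.F) :
    P.I i ⊆ Q.I j ∨ Q.I j ⊆ P.I i ∨ P.I i ∩ Q.I j = ∅ := by
  by_contra! h
  obtain ⟨hPQ, hQP, y, hy⟩ := h
  obtain ⟨a, ha⟩ := Set.not_subset.1 hPQ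
  obtain ⟨b, hb⟩ := Set.not_subset.1 hQP
  rcases (P.I_interval i hi).mem_Ioo_of_mem_diff (Q.I_interval j hj) hy ha hb with
    ⟨hay, hyb⟩ | ⟨hby, hya⟩
  · exact NormingPartition.not_crossing hx P Q hi hj ha hy hb hay hyb
  · exact NormingPartition.not_crossing hx Q P hj hi hb (Set.inter_comm _ _ ▸ hy) ha hby hya

theorem stmt14 (x : ℕ → ℝ) (hx : MemJ x) (hx0 : x ≠ 0)
    (P Q : NormingPartition x) (i : ℕ) (hi : i ∈ P.F) (j : ℕ) (hj : j ∈ Q.F) :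
    P.I i ⊆ Q.I j ∨ Q.I j ⊆ P.I i ∨ P.I i ∩ Q.I j = ∅ :=
  stmt14_general x hx P Q i hi j hj
end
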